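/- Let b ∈ ℝ, let f: ℝ² → ℝ be C¹, and let U ⊆ ℝ² be a bounded measurable set such that ∇_f f ∈ L²(U). Define f̂(x,z) = f(x, z + b·x²/2) + b·x (so that Γ_{f̂} is the image of Γ_f under the shear automorphism P_b) and let ĥ: ℝ² → ℝ², ĥ(x,z) = (x, z − b·x²/2). Then ĥ is a measure-preserving bijection of ℝ² and E_{ĥ(U)}(f̂) = E_U(f) + (b²/2)·μ(U) + b·∫_U ∇_f f dμ. -/

import Mathlib

/-!
`ĥ(x, z) = (x, z - b x²/2)` translates each vertical line, so it preserves Lebesgue measure.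
By the chain rule `∇_{f̂} f̂ ∘ ĥ = ∇_f f + b` pointwise, hence after changing variables
`E_{ĥ(U)}(f̂) = ½ ∫_U (∇_f f + b)²`, and expanding the square gives the formula.
-/

open MeasureTheory Set

/-- Partial derivative in the `x` (first) direction. -/
noncomputable def pdx (g : ℝ × ℝ → ℝ) (p : ℝ × ℝ) : ℝ := fderiv ℝ g p (1, 0)

/-- Partial derivative in the `z` (second) direction. -/
noncomputable def pdz (g : ℝ × ℝ → ℝ) (p : ℝ × ℝ) : ℝ := fderiv ℝ g p (0, 1)

/-- The intrinsic gradient operator `∇_f g = ∂_x g − f·∂_z g`. -/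
noncomputable def igrad (f g : ℝ × ℝ → ℝ) (p : ℝ × ℝ) : ℝ := pdx g p - f p * pdz g p

/-- The intrinsic Dirichlet energy `E_U(f) = (1/2)∫_U (∇_f f)² dμ`. -/
noncomputable def energy (U : Set (ℝ × ℝ)) (f : ℝ × ℝ → ℝ) : ℝ :=
  (1 / 2) * ∫ p in U, (igrad f f p) ^ 2

def MeasurableEquiv.verticalShear (g : ℝ → ℝ) (hg : Measurable g) : ℝ × ℝ ≃ᵐ ℝ × ℝ where
  toEquiv := (Equiv.refl ℝ).prodShear fun x => Equiv.addRight (g x)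
  measurable_toFun := by
    show Measurable fun p : ℝ × ℝ => (p.1, p.2 + g p.1)
    fun_prop
  measurable_invFun := by
    show Measurable fun p : ℝ × ℝ => (p.1, p.2 - g p.1)
    fun_prop

@[simp]
lemma MeasurableEquiv.verticalShear_apply (g : ℝ → ℝ) (hg : Measurable g) (p : ℝ × ℝ) :
    verticalShear g hg p = (p.1, p.2 + g p.1) := rfl

lemma MeasurableEquiv.measurePreserving_verticalShear (g : ℝ → ℝ) (hg : Measurable g) :
    MeasurePreserving (verticalShear g hg) := by
  rw [Measure.volume_eq_prod]
  exact (MeasurePreserving.id volume).skew_product (g := fun x z => z + g x) (by fun_prop)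
    (.of_forall fun x => (measurePreserving_add_right volume _).map_eq)

lemma hasFDerivAt_parabolicShear (b : ℝ) (p : ℝ × ℝ) :
    HasFDerivAt (fun q : ℝ × ℝ => (q.1, q.2 + b * q.1 ^ 2 / 2))
      ((ContinuousLinearMap.fst ℝ ℝ ℝ).prod
        (ContinuousLinearMap.snd ℝ ℝ ℝ + (b * p.1) • ContinuousLinearMap.fst ℝ ℝ ℝ)) p := by
  refine hasFDerivAt_fst.prodMk ?_
  have h := hasFDerivAt_snd.add (((hasFDerivAt_fst (𝕜 := ℝ) (p := p)).pow 2).const_mul (b / 2))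
  convert h using 1
  · funext q; simp; ring
  · ext <;> simp; ring

noncomputable def shearTransform (b : ℝ) (f : ℝ × ℝ → ℝ) (p : ℝ × ℝ) : ℝ :=
  f (p.1, p.2 + b * p.1 ^ 2 / 2) + b * p.1

lemma fderiv_shearTransform_apply (b : ℝ) {f : ℝ × ℝ → ℝ} {p : ℝ × ℝ}
    (hf : DifferentiableAt ℝ f (p.1, p.2 + b * p.1 ^ 2 / 2)) (v : ℝ × ℝ) :
    fderiv ℝ (shearTransform b f) p v
      = fderiv ℝ f (p.1, p.2 + b * p.1 ^ 2 / 2) (v.1, v.2 + b * p.1 * v.1) + b * v.1 := by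
  have h : HasFDerivAt (shearTransform b f) _ p :=
    (hf.hasFDerivAt.comp p (hasFDerivAt_parabolicShear b p)).add (hasFDerivAt_fst.const_mul b)
  rw [h.fderiv]
  simp [smul_eq_mul]

/-- The drift `b * x` of `shearTransform` cancels the term `b * x * ∂_z f` produced by the
chain rule in `∂_x`, leaving only the constant `b`. -/
lemma igrad_shearTransform (b : ℝ) {f : ℝ × ℝ → ℝ} (hf : Differentiable ℝ f) (p : ℝ × ℝ) :
    igrad (shearTransform b f) (shearTransform b f) p
      = igrad f f (p.1, p.2 + b * p.1 ^ 2 / 2) + b := by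
  have hsplit : ((1 : ℝ), b * p.1) = (1, 0) + (b * p.1) • ((0 : ℝ), (1 : ℝ)) := by
    ext <;> simp
  simp only [igrad, pdx, pdz, fderiv_shearTransform_apply b (hf _), shearTransform, mul_zero,
    mul_one, add_zero, zero_add, hsplit, map_add, map_smul, smul_eq_mul]
  ring

lemma integral_add_const_sq {α : Type*} [MeasurableSpace α] {μ : Measure α} [IsFiniteMeasure μ]
    {g : α → ℝ} (hg : MemLp g 2 μ) (b : ℝ) :
    ∫ x, (g x + b) ^ 2 ∂μ = ∫ x, g x ^ 2 ∂μ + b ^ 2 * μ.real univ + 2 * b * ∫ x, g x ∂μ := by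
  have hg1 : Integrable g μ := hg.integrable one_le_two
  have hexpand : ∀ x, (g x + b) ^ 2 = (g x ^ 2 + b ^ 2) + 2 * b * g x := fun x => by ring
  simp_rw [hexpand]
  have hsq : Integrable (fun x => g x ^ 2 + b ^ 2) μ := hg.integrable_sq.add (integrable_const _)
  rw [integral_add hsq (hg1.const_mul _), integral_add hg.integrable_sq (integrable_const _),
    integral_const_mul, integral_const, smul_eq_mul, mul_comm (μ.real univ)]

theorem stmt6_general (b : ℝ) (f : ℝ × ℝ → ℝ) (hf : ContDiff ℝ 1 f)
    (U : Set (ℝ × ℝ)) (hUb : Bornology.IsBounded U)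
    (hL2 : MemLp (igrad f f) 2 (volume.restrict U))
    (fhat : ℝ × ℝ → ℝ)
    (hfhat : ∀ x z : ℝ, fhat (x, z) = f (x, z + b * x ^ 2 / 2) + b * x)
    (hhat : ℝ × ℝ → ℝ × ℝ)
    (hh : ∀ p : ℝ × ℝ, hhat p = (p.1, p.2 - b * p.1 ^ 2 / 2)) :
    MeasurePreserving hhat volume volume ∧ Function.Bijective hhat ∧
      energy (hhat '' U) fhat
        = energy U f + b ^ 2 / 2 * (volume U).toReal + b * ∫ p in U, igrad f f p := by
  set e := MeasurableEquiv.verticalShear (fun x => -(b * x ^ 2 / 2)) (by fun_prop)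
  obtain rfl : hhat = e := funext fun p => by simp [e, hh, sub_eq_add_neg]
  have hfhat' : fhat = shearTransform b f := funext fun p => hfhat p.1 p.2
  have hmp : MeasurePreserving e := MeasurableEquiv.measurePreserving_verticalShear _ _
  refine ⟨hmp, e.bijective, ?_⟩
  have : IsFiniteMeasure (volume.restrict U) :=
    isFiniteMeasure_restrict.2 hUb.measure_lt_top.ne
  have hshear (p : ℝ × ℝ) : igrad fhat fhat (e p) = igrad f f p + b := by
    rw [hfhat', igrad_shearTransform b (hf.differentiable one_ne_zero)]
    simp [e]
  simp only [energy, hmp.setIntegral_image_emb e.measurableEmbedding, hshear,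
    integral_add_const_sq hL2, Measure.restrict_apply_univ, measureReal_def]
  ring

/-- under the shear `P_b`, with `f̂(x,z) = f(x, z + b·x²/2) + b·x` and
`ĥ(x,z) = (x, z − b·x²/2)`, the map `ĥ` is a measure-preserving bijection of `ℝ²` and
`E_{ĥ(U)}(f̂) = E_U(f) + (b²/2)·μ(U) + b·∫_U ∇_f f dμ`. -/
theorem stmt6 (b : ℝ) (f : ℝ × ℝ → ℝ) (hf : ContDiff ℝ 1 f)
    (U : Set (ℝ × ℝ)) (hUb : Bornology.IsBounded U) (hUm : MeasurableSet U)
    (hL2 : MemLp (igrad f f) 2 (volume.restrict U))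
    (fhat : ℝ × ℝ → ℝ)
    (hfhat : ∀ x z : ℝ, fhat (x, z) = f (x, z + b * x ^ 2 / 2) + b * x)
    (hhat : ℝ × ℝ → ℝ × ℝ)
    (hh : ∀ p : ℝ × ℝ, hhat p = (p.1, p.2 - b * p.1 ^ 2 / 2)) :
    MeasurePreserving hhat volume volume ∧ Function.Bijective hhat ∧
      energy (hhat '' U) fhat
        = energy U f + b ^ 2 / 2 * (volume U).toReal + b * ∫ p in U, igrad f f p :=
  stmt6_general b f hf U hUb hL2 fhat hfhat hhat hh
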